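/- Let W_d ⊂ W(0,T) be a finite dimensional subspace, y ∈ W(0,T) the solution of b(y,v) = l(v) for all v ∈ W(0,T), y_d ∈ W_d the Galerkin solution, e := y − y_d, and define the residual functional r(v) := l(v) − b(y_d,v) for v ∈ W(0,T). Then b(e,v) = r(v) for all v ∈ W(0,T), and the a posteriori error bound ‖e‖²_{W(0,T)} + ‖e(T)‖²_H ≤ ‖r‖_{W(0,T)*} · ‖e‖_{W(0,T)} holds. -/

import Mathlib

/-!
Abstract setup for the least-squares space-time formulation of the abstract
parabolic (heat) equation, following Hinze–Kahle.

* `V, H` are separable real Hilbert spaces forming a Gelfand triple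
  `V ↪ H ≡ H* ↪ V*` via the embedding `ι : V →L[ℝ] H`.
* `A : V → V*` is linear, bounded, selfadjoint, coercive and boundedly
  invertible with inverse the Riesz lift `R : V* → V`, i.e.
  `⟨l,v⟩_{V*,V} = (R l, v)_V`.  The dual inner product is
  `(l,k)_{V*} = (R l, R k)_V`.
* `W` is the space `W(0,T) = {v ∈ L²(0,T;V) : vₜ ∈ L²(0,T;V*)}`; an element
  `w : W` has an `L²(0,T;V)`-representative `val w : ℝ → V` (whose composition
  with `ι` is the continuous `H`-valued representative) and a weak time
  derivative `dt w : ℝ → V*`.  The `W(0,T)`-inner product is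
  `(u,w) = ∫₀ᵀ (uₜ,wₜ)_{V*} + ∫₀ᵀ (u,w)_V`, the embedding
  `W(0,T) ↪ C([0,T];H)` is continuous, and the fundamental
  integration-by-parts identity
  `‖w(T)‖²_H - ‖w(0)‖²_H = 2∫₀ᵀ ⟨wₜ,w⟩` holds.
-/

open MeasureTheory
open scoped RealInnerProductSpace

noncomputable section

structure SpaceTimeSetup (V H W : Type*)
    [NormedAddCommGroup V] [InnerProductSpace ℝ V] [CompleteSpace V]
    [NormedAddCommGroup H] [InnerProductSpace ℝ H] [CompleteSpace H]
    [NormedAddCommGroup W] [InnerProductSpace ℝ W] [CompleteSpace W] where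
  /-- the final time `T > 0` -/
  T : ℝ
  T_pos : 0 < T
  /-- the embedding `V ↪ H` of the Gelfand triple -/
  ι : V →L[ℝ] H
  ι_inj : Function.Injective ι
  /-- the operator `A : V → V*` -/
  A : V →L[ℝ] StrongDual ℝ V
  /-- the Riesz lift `R = A⁻¹ : V* → V` -/
  R : StrongDual ℝ V →L[ℝ] V
  /-- `⟨l,v⟩_{V*,V} = (R l, v)_V` -/
  riesz : ∀ (l : StrongDual ℝ V) (v : V), l v = ⟪R l, v⟫
  R_A : ∀ v : V, R (A v) = v
  A_R : ∀ l : StrongDual ℝ V, A (R l) = l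
  /-- the `L²(0,T;V)`-representative of an element of `W(0,T)` -/
  val : W →ₗ[ℝ] (ℝ → V)
  /-- the weak time derivative, an element of `L²(0,T;V*)` -/
  dt : W →ₗ[ℝ] (ℝ → StrongDual ℝ V)
  int_val : ∀ u w : W, IntervalIntegrable (fun t => ⟪val u t, val w t⟫) volume 0 T
  int_dt : ∀ u w : W,
    IntervalIntegrable (fun t => ⟪R (dt u t), R (dt w t)⟫) volume 0 T
  int_mix : ∀ u w : W, IntervalIntegrable (fun t => dt u t (val w t)) volume 0 T
  /-- the canonical inner product of `W(0,T)` -/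
  inner_def : ∀ u w : W, ⟪u, w⟫ =
    (∫ t in (0:ℝ)..T, ⟪R (dt u t), R (dt w t)⟫) +
      ∫ t in (0:ℝ)..T, ⟪val u t, val w t⟫
  /-- the continuous embedding `W(0,T) ↪ C([0,T];H)` -/
  emb : ∃ C > 0, ∀ (w : W) (t : ℝ), t ∈ Set.Icc 0 T → ‖ι (val w t)‖ ≤ C * ‖w‖
  /-- `‖w(T)‖²_H - ‖w(0)‖²_H = 2 ∫₀ᵀ ⟨wₜ, w⟩_{V*,V}` -/
  ftc : ∀ w : W, ‖ι (val w T)‖ ^ 2 - ‖ι (val w 0)‖ ^ 2 =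
    2 * ∫ t in (0:ℝ)..T, dt w t (val w t)

variable {V H W : Type*}
    [NormedAddCommGroup V] [InnerProductSpace ℝ V] [CompleteSpace V]
    [NormedAddCommGroup H] [InnerProductSpace ℝ H] [CompleteSpace H]
    [NormedAddCommGroup W] [InnerProductSpace ℝ W] [CompleteSpace W]

/-- the least-squares bilinear form
`b(v,w) = ∫₀ᵀ (vₜ + A v, wₜ + A w)_{V*} + (v(0), w(0))_H` -/
def SpaceTimeSetup.b (S : SpaceTimeSetup V H W) (v w : W) : ℝ :=
  (∫ t in (0:ℝ)..S.T,
      ⟪S.R (S.dt v t + S.A (S.val v t)), S.R (S.dt w t + S.A (S.val w t))⟫) +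
    ⟪S.ι (S.val v 0), S.ι (S.val w 0)⟫

/-- the right-hand side linear form
`l(v) = ∫₀ᵀ (f, vₜ + A v)_{V*} + (y₀, v(0))_H` -/
def SpaceTimeSetup.lform (S : SpaceTimeSetup V H W)
    (f : ℝ → StrongDual ℝ V) (y₀ : H) (v : W) : ℝ :=
  (∫ t in (0:ℝ)..S.T, ⟪S.R (f t), S.R (S.dt v t + S.A (S.val v t))⟫) +
    ⟪y₀, S.ι (S.val v 0)⟫

/-!
Expanding `‖vₜ + A v‖²_{V*} = ‖vₜ‖²_{V*} + 2⟨vₜ, v⟩ + ‖v‖²_V` (with `R = A⁻¹` the Riesz lift)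
and integrating, the cross term is `‖v(T)‖²_H - ‖v(0)‖²_H`, so
`b(v,v) = ‖v‖²_{W(0,T)} + ‖v(T)‖²_H`. Since `b` is linear in its first argument,
`b(e,·) = l - b(y_d,·) = r`, whence `‖e‖² + ‖e(T)‖² = b(e,e) = r(e) ≤ ‖r‖ ‖e‖`.
-/

namespace SpaceTimeSetup

variable (S : SpaceTimeSetup V H W)

lemma inner_R_add_A (l k : StrongDual ℝ V) (v w : V) :
    ⟪S.R (l + S.A v), S.R (k + S.A w)⟫ = ⟪S.R l, S.R k⟫ + l w + k v + ⟪v, w⟫ := by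
  rw [map_add, map_add, S.R_A, S.R_A, inner_add_left, inner_add_right, inner_add_right,
    S.riesz l, S.riesz k, real_inner_comm v]
  ring

lemma intervalIntegrable_b_integrand (v w : W) :
    IntervalIntegrable
      (fun t => ⟪S.R (S.dt v t + S.A (S.val v t)), S.R (S.dt w t + S.A (S.val w t))⟫)
      volume 0 S.T := by
  simp only [inner_R_add_A]
  exact (((S.int_dt v w).add (S.int_mix v w)).add (S.int_mix w v)).add (S.int_val v w)

lemma b_sub_left (u₁ u₂ w : W) : S.b (u₁ - u₂) w = S.b u₁ w - S.b u₂ w := by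
  simp only [b, map_sub, Pi.sub_apply, sub_add_sub_comm, inner_sub_left]
  rw [intervalIntegral.integral_sub (S.intervalIntegrable_b_integrand u₁ w)
    (S.intervalIntegrable_b_integrand u₂ w)]
  ring

lemma b_self (v : W) : S.b v v = ‖v‖ ^ 2 + ‖S.ι (S.val v S.T)‖ ^ 2 := by
  have hnorm := S.inner_def v v
  have hparts := S.ftc v
  rw [real_inner_self_eq_norm_sq] at hnorm
  simp only [b, inner_R_add_A, real_inner_self_eq_norm_sq (S.ι _)]
  rw [intervalIntegral.integral_add (((S.int_dt v v).add (S.int_mix v v)).add (S.int_mix v v))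
      (S.int_val v v),
    intervalIntegral.integral_add ((S.int_dt v v).add (S.int_mix v v)) (S.int_mix v v),
    intervalIntegral.integral_add (S.int_dt v v) (S.int_mix v v)]
  linarith

end SpaceTimeSetup

theorem aposteriori_bound_general (S : SpaceTimeSetup V H W)
    (f : ℝ → StrongDual ℝ V) (y₀ : H)
    (y yd : W) (hy : ∀ v : W, S.b y v = S.lform f y₀ v)
    (r : W →L[ℝ] ℝ) (hr : ∀ v : W, r v = S.lform f y₀ v - S.b yd v) :
    (∀ v : W, S.b (y - yd) v = r v) ∧
      ‖y - yd‖ ^ 2 + ‖S.ι (S.val (y - yd) S.T)‖ ^ 2 ≤ ‖r‖ * ‖y - yd‖ := by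
  have error_eq (v : W) : S.b (y - yd) v = r v := by rw [S.b_sub_left, hy, hr]
  refine ⟨error_eq, ?_⟩
  calc ‖y - yd‖ ^ 2 + ‖S.ι (S.val (y - yd) S.T)‖ ^ 2 = r (y - yd) := by
        rw [← S.b_self, error_eq]
    _ ≤ ‖r‖ * ‖y - yd‖ := (Real.le_norm_self _).trans (r.le_opNorm _)

/-- a posteriori bound: with the residual
`r(v) = l(v) - b(y_d, v)` one has `b(e,v) = r(v)` for all `v ∈ W(0,T)` and
`‖e‖²_{W(0,T)} + ‖e(T)‖²_H ≤ ‖r‖_{W(0,T)*} ‖e‖_{W(0,T)}` for the error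
`e = y - y_d`. -/
theorem aposteriori_bound (S : SpaceTimeSetup V H W)
    (f : ℝ → StrongDual ℝ V) (y₀ : H)
    (Wd : Submodule ℝ W) (hWd : FiniteDimensional ℝ Wd)
    (y yd : W) (hy : ∀ v : W, S.b y v = S.lform f y₀ v)
    (hyd_mem : yd ∈ Wd) (hyd : ∀ vd ∈ Wd, S.b yd vd = S.lform f y₀ vd)
    (r : W →L[ℝ] ℝ) (hr : ∀ v : W, r v = S.lform f y₀ v - S.b yd v) :
    (∀ v : W, S.b (y - yd) v = r v) ∧
      ‖y - yd‖ ^ 2 + ‖S.ι (S.val (y - yd) S.T)‖ ^ 2 ≤ ‖r‖ * ‖y - yd‖ :=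
  aposteriori_bound_general S f y₀ y yd hy r hr
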